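/- arXiv:2506.13512 — 3 statements merged into one kernel-verified Lean document; each statement's English description precedes it below -/
import Mathlib

section
/- (Real bipolar theorem, finite-dimensional form.) Fix d ≥ 1 and let K be a closed real matrix convex set over ℝ^d with 0 ∈ K_1. Define the second polar by (K°°)_n = {x ∈ (M_n(ℝ))^d : for every m and every A ∈ (K°)_m, ℜ⟨x, A⟩ ≤ 1_{nm}}. Then (K°°)_n = K_n for every n. -/
open Matrix
open scoped Kronecker

/-- Block-diagonal direct sum of square matrices. -/
def dsum {α : Type*} [Zero α] {m p : ℕ} (A : Matrix (Fin m) (Fin m) α)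
    (B : Matrix (Fin p) (Fin p) α) : Matrix (Fin (m + p)) (Fin (m + p)) α :=
  Matrix.reindex finSumFinEquiv finSumFinEquiv (Matrix.fromBlocks A 0 0 B)

/-- A real matrix convex set over `ℝ^d`: a graded family of sets of `d`-tuples of square
real matrices, closed under direct sums and under compressions by real isometries. -/
def IsRealMatrixConvex (d : ℕ) (K : ∀ n : ℕ, Set (Fin d → Matrix (Fin n) (Fin n) ℝ)) : Prop :=
  (∀ (m p : ℕ) (x : Fin d → Matrix (Fin m) (Fin m) ℝ) (y : Fin d → Matrix (Fin p) (Fin p) ℝ),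
    x ∈ K m → y ∈ K p → (fun j => dsum (x j) (y j)) ∈ K (m + p)) ∧
  (∀ (m p : ℕ) (x : Fin d → Matrix (Fin m) (Fin m) ℝ) (β : Matrix (Fin m) (Fin p) ℝ),
    x ∈ K m → βᵀ * β = 1 → (fun j => βᵀ * x j * β) ∈ K p)

/-- `ℜ M = (M + Mᵀ)/2`. -/
noncomputable def reSym {n : Type*} (M : Matrix n n ℝ) : Matrix n n ℝ := (2 : ℝ)⁻¹ • (M + Mᵀ)

/-- The Loewner order: `A ≤ B` iff `B - A` is positive semidefinite. -/
def loewnerLE {R : Type*} [CommRing R] [PartialOrder R] [StarRing R] {n : Type*} [Fintype n]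
    (A B : Matrix n n R) : Prop :=
  (B - A).PosSemidef

/-- `⟨x, A⟩ = Σ_j x_j ⊗ A_j` (Kronecker products). -/
noncomputable def pairing {d m n : ℕ} (x : Fin d → Matrix (Fin m) (Fin m) ℝ)
    (A : Fin d → Matrix (Fin n) (Fin n) ℝ) : Matrix (Fin m × Fin n) (Fin m × Fin n) ℝ :=
  ∑ j, x j ⊗ₖ A j

/-- The polar of a graded family `K`: at level `n`, the tuples `A` with
`ℜ⟨x, A⟩ ≤ 1_{mn}` for every `m` and every `x ∈ K_m`. -/
def matPolar (d : ℕ) (K : ∀ n : ℕ, Set (Fin d → Matrix (Fin n) (Fin n) ℝ)) (n : ℕ) :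
    Set (Fin d → Matrix (Fin n) (Fin n) ℝ) :=
  {A | ∀ (m : ℕ) (x : Fin d → Matrix (Fin m) (Fin m) ℝ), x ∈ K m →
    loewnerLE (reSym (pairing x A)) 1}

/-!
Suppose `x` lies in the bipolar but not in `K_n`. The pairs `(VᵀV, VᵀyV)` with `y ∈ K_p` form a
convex cone in `M_n × M_nᵈ` (direct sums give additivity), and `(1, x)` is not in its closure:
a compression whose Gram matrix `VᵀV` is close to `1` can be shrunk to a contractive one, and
contractive compressions stay in `K` (dilate `V` to the isometry `[V; W]` with `WᵀW = 1 - VᵀV`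
and use `0 ∈ K`). Hahn–Banach, read through the trace pairing, yields a symmetric `B` and a tuple
`A` with `∑ⱼ tr (Aⱼᵀ VᵀyⱼV) ≤ tr (B VᵀV)` for all compressions but `tr B < ∑ⱼ tr (Aⱼᵀ xⱼ)`.
Taking `y = 0` shows `B ⪰ 0`. Writing `B + δ = RᵀR`, the tuple `R⁻ᵀAR⁻¹` lies in the polar, and
testing `x` against it gives `∑ⱼ tr (Aⱼᵀ xⱼ) ≤ tr B + nδ`; letting `δ → 0` is a contradiction.
-/

namespace MatrixConvex

section

variable {ι m n p k : Type*} [Fintype ι] [Fintype m] [Fintype n] [Fintype p] [Fintype k]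

def compress (V : Matrix p n ℝ) (y : ι → Matrix p p ℝ) : ι → Matrix n n ℝ :=
  fun j => Vᵀ * y j * V

def tupleTrace (A z : ι → Matrix n n ℝ) : ℝ :=
  ∑ j, ((A j)ᵀ * z j).trace

lemma tupleTrace_compress (S : Matrix n k ℝ) (A : ι → Matrix n n ℝ) (V : Matrix p k ℝ)
    (y : ι → Matrix p p ℝ) :
    tupleTrace (compress S A) (compress V y) = tupleTrace A (compress (V * Sᵀ) y) := by
  refine Finset.sum_congr rfl fun j _ => ?_
  simp only [compress, transpose_mul, transpose_transpose, Matrix.mul_assoc]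
  rw [trace_mul_comm]
  simp only [Matrix.mul_assoc]

omit [Fintype ι] in
lemma compress_one [DecidableEq n] (y : ι → Matrix n n ℝ) : compress 1 y = y := by
  funext j; simp [compress]

lemma loewnerLE_reSym_one_iff [DecidableEq n] (M : Matrix n n ℝ) :
    loewnerLE (reSym M) 1 ↔ ∀ v : n → ℝ, v ⬝ᵥ (M *ᵥ v) ≤ v ⬝ᵥ v := by
  have hquad : ∀ v : n → ℝ, v ⬝ᵥ (reSym M *ᵥ v) = v ⬝ᵥ (M *ᵥ v) := fun v => by
    have : v ⬝ᵥ (Mᵀ *ᵥ v) = v ⬝ᵥ (M *ᵥ v) := by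
      rw [dotProduct_mulVec, vecMul_transpose, dotProduct_comm]
    simp only [reSym, smul_mulVec, add_mulVec, dotProduct_smul, dotProduct_add, this,
      smul_eq_mul]
    ring
  have hsymm : (1 - reSym M).IsHermitian := by
    simp only [IsHermitian, conjTranspose_eq_transpose_of_trivial, reSym, transpose_sub,
      transpose_one, transpose_smul, transpose_add, transpose_transpose, add_comm]
  simp only [loewnerLE, posSemidef_iff_dotProduct_mulVec, hsymm, star_trivial, sub_mulVec,
    one_mulVec, dotProduct_sub, hquad, sub_nonneg, true_and]

variable {d : ℕ}

lemma dotProduct_pairing_mulVec {a b : ℕ} (y : Fin d → Matrix (Fin a) (Fin a) ℝ)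
    (A : Fin d → Matrix (Fin b) (Fin b) ℝ) (V : Matrix (Fin a) (Fin b) ℝ) :
    vec Vᵀ ⬝ᵥ (pairing y A *ᵥ vec Vᵀ) = tupleTrace A (compress V y) := by
  simp only [pairing, sum_mulVec, dotProduct_sum, kronecker_mulVec_vec, vec_dotProduct_vec,
    tupleTrace, compress]
  refine Finset.sum_congr rfl fun j _ => ?_
  rw [← trace_transpose]
  simp only [transpose_mul, transpose_transpose, Matrix.mul_assoc]
  rw [← Matrix.mul_assoc (y j) V, trace_mul_comm]
  simp only [Matrix.mul_assoc]

lemma loewnerLE_reSym_pairing_one_iff {a b : ℕ} (y : Fin d → Matrix (Fin a) (Fin a) ℝ)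
    (A : Fin d → Matrix (Fin b) (Fin b) ℝ) :
    loewnerLE (reSym (pairing y A)) 1 ↔
      ∀ V : Matrix (Fin a) (Fin b) ℝ, tupleTrace A (compress V y) ≤ (Vᵀ * V).trace := by
  have hsurj : Function.Surjective fun V : Matrix (Fin a) (Fin b) ℝ => vec Vᵀ :=
    vec_bijective.surjective.comp fun X => ⟨Xᵀ, transpose_transpose X⟩
  rw [loewnerLE_reSym_one_iff, hsurj.forall]
  simp only [dotProduct_pairing_mulVec, vec_dotProduct_vec, transpose_transpose]
  exact forall_congr' fun V => by rw [trace_mul_comm]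

lemma exists_trace_transpose_mul_eq (g : Matrix m n ℝ →ₗ[ℝ] ℝ) :
    ∃ G : Matrix m n ℝ, ∀ P, g P = (Gᵀ * P).trace := by
  classical
  refine ⟨of fun i j => g (single i j 1), fun P => ?_⟩
  conv_lhs => rw [matrix_eq_sum_single P]
  simp only [map_sum, trace, diag_apply, mul_apply, transpose_apply, of_apply]
  rw [Finset.sum_comm]
  refine Finset.sum_congr rfl fun i _ => Finset.sum_congr rfl fun j _ => ?_
  rw [show single j i (P j i) = P j i • single j i 1 by rw [smul_single, smul_eq_mul, mul_one],
    map_smul, smul_eq_mul, mul_comm]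

lemma exists_trace_add_tupleTrace_eq [DecidableEq ι]
    (f : Matrix n n ℝ × (ι → Matrix n n ℝ) →ₗ[ℝ] ℝ) :
    ∃ (M : Matrix n n ℝ) (A : ι → Matrix n n ℝ),
      ∀ P z, f (P, z) = (Mᵀ * P).trace + tupleTrace A z := by
  obtain ⟨M, hM⟩ := exists_trace_transpose_mul_eq (f.comp (LinearMap.inl ℝ _ _))
  choose A hA using fun j =>
    exists_trace_transpose_mul_eq
      (f.comp ((LinearMap.inr ℝ _ _).comp (LinearMap.single ℝ (fun _ : ι => Matrix n n ℝ) j)))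
  refine ⟨M, A, fun P z => ?_⟩
  have hsplit : (P, z) = (P, 0) + ∑ j, (0, Pi.single j (z j)) := by
    simp [Prod.ext_iff, Prod.fst_sum, Prod.snd_sum, Finset.univ_sum_single]
  simp only [LinearMap.comp_apply, LinearMap.inl_apply, LinearMap.inr_apply,
    LinearMap.coe_single] at hM hA
  rw [hsplit, map_add, map_sum, hM]
  simp only [hA, tupleTrace]

lemma exists_transpose_mul_self_eq [DecidableEq n] {D : Matrix n n ℝ} (hD : D.PosSemidef) :
    ∃ R : Matrix n n ℝ, Rᵀ * R = D := by
  open scoped MatrixOrder in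
  refine ⟨CFC.sqrt D, ?_⟩
  rw [← conjTranspose_eq_transpose_of_trivial, (CFC.sqrt_nonneg D).posSemidef.isHermitian.eq,
    CFC.sqrt_mul_sqrt_self D hD.nonneg]

def sumAbsEntries (M : Matrix n n ℝ) : ℝ :=
  ∑ i, ∑ j, |M i j|

lemma continuous_sumAbsEntries : Continuous (sumAbsEntries : Matrix n n ℝ → ℝ) := by
  unfold sumAbsEntries
  fun_prop

lemma sumAbsEntries_nonneg (M : Matrix n n ℝ) : 0 ≤ sumAbsEntries M := by
  unfold sumAbsEntries; positivity

lemma dotProduct_mulVec_le_sumAbsEntries_mul (M : Matrix n n ℝ) (w : n → ℝ) :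
    w ⬝ᵥ (M *ᵥ w) ≤ sumAbsEntries M * (w ⬝ᵥ w) := by
  have hsq : ∀ i, w i * w i ≤ w ⬝ᵥ w := fun i =>
    Finset.single_le_sum (f := fun k => w k * w k) (fun k _ => mul_self_nonneg (w k))
      (Finset.mem_univ i)
  have hw : ∀ i j, |w i * w j| ≤ w ⬝ᵥ w := fun i j => by
    rw [abs_mul]
    nlinarith [hsq i, hsq j, sq_nonneg (|w i| - |w j|), sq_abs (w i), sq_abs (w j)]
  calc w ⬝ᵥ (M *ᵥ w) = ∑ i, ∑ j, M i j * (w i * w j) := by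
        simp only [dotProduct, mulVec, Finset.mul_sum]
        exact Finset.sum_congr rfl fun i _ => Finset.sum_congr rfl fun j _ => by ring
    _ ≤ ∑ i, ∑ j, |M i j| * (w ⬝ᵥ w) := by
        refine Finset.sum_le_sum fun i _ => Finset.sum_le_sum fun j _ => ?_
        calc M i j * (w i * w j) ≤ |M i j| * |w i * w j| := by
              rw [← abs_mul]; exact le_abs_self _
          _ ≤ |M i j| * (w ⬝ᵥ w) := mul_le_mul_of_nonneg_left (hw i j) (abs_nonneg _)
    _ = sumAbsEntries M * (w ⬝ᵥ w) := by simp only [sumAbsEntries, Finset.sum_mul]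

lemma posSemidef_one_sub_inv_smul [DecidableEq n] {P : Matrix n n ℝ} (hP : Pᵀ = P) :
    (1 - (1 + sumAbsEntries (P - 1))⁻¹ • P).PosSemidef := by
  have hρ := sumAbsEntries_nonneg (P - 1)
  refine .of_dotProduct_mulVec_nonneg ?_ fun w => ?_
  · simp [IsHermitian, conjTranspose_eq_transpose_of_trivial, hP]
  have hquad : w ⬝ᵥ (P *ᵥ w) ≤ (1 + sumAbsEntries (P - 1)) * (w ⬝ᵥ w) := by
    have := dotProduct_mulVec_le_sumAbsEntries_mul (P - 1) w
    simp only [sub_mulVec, one_mulVec, dotProduct_sub] at this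
    linarith
  simp only [star_trivial, sub_mulVec, one_mulVec, smul_mulVec, dotProduct_sub, dotProduct_smul,
    smul_eq_mul, sub_nonneg]
  rwa [inv_mul_le_iff₀ (by positivity)]

lemma trace_reSym_mul (M : Matrix n n ℝ) {P : Matrix n n ℝ} (hP : Pᵀ = P) :
    (reSym M * P).trace = (Mᵀ * P).trace := by
  have : (M * P).trace = (Mᵀ * P).trace := by
    rw [← trace_transpose, transpose_mul, hP, trace_mul_comm]
  rw [reSym, smul_mul, add_mul, trace_smul, trace_add, this, smul_eq_mul]
  ring

end

section

variable {α : Type*} [CommSemiring α] {p₁ p₂ n : ℕ}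

def stack (V₁ : Matrix (Fin p₁) (Fin n) α) (V₂ : Matrix (Fin p₂) (Fin n) α) :
    Matrix (Fin (p₁ + p₂)) (Fin n) α :=
  reindex finSumFinEquiv (Equiv.refl _) (fromRows V₁ V₂)

lemma transpose_stack_mul_dsum_mul_stack (V₁ : Matrix (Fin p₁) (Fin n) α)
    (V₂ : Matrix (Fin p₂) (Fin n) α) (Y₁ : Matrix (Fin p₁) (Fin p₁) α)
    (Y₂ : Matrix (Fin p₂) (Fin p₂) α) :
    (stack V₁ V₂)ᵀ * dsum Y₁ Y₂ * stack V₁ V₂ = V₁ᵀ * Y₁ * V₁ + V₂ᵀ * Y₂ * V₂ := by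
  simp only [stack, dsum, reindex_apply, transpose_submatrix, transpose_fromRows,
    submatrix_mul_equiv, fromCols_mul_fromBlocks, fromCols_mul_fromRows]
  simp

lemma transpose_stack_mul_stack (V₁ : Matrix (Fin p₁) (Fin n) α)
    (V₂ : Matrix (Fin p₂) (Fin n) α) :
    (stack V₁ V₂)ᵀ * stack V₁ V₂ = V₁ᵀ * V₁ + V₂ᵀ * V₂ := by
  simpa [dsum] using transpose_stack_mul_dsum_mul_stack V₁ V₂ 1 1

end

variable {d : ℕ} {K : ∀ n : ℕ, Set (Fin d → Matrix (Fin n) (Fin n) ℝ)}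

theorem _root_.IsRealMatrixConvex.zero_mem (hK : IsRealMatrixConvex d K) (h0 : (0 : Fin d → Matrix (Fin 1) (Fin 1) ℝ) ∈ K 1)
    (n : ℕ) : (0 : Fin d → Matrix (Fin n) (Fin n) ℝ) ∈ K n := by
  induction n with
  | zero =>
    convert hK.2 1 0 0 0 h0 (by ext i; exact i.elim0)
    ext j i; exact i.elim0
  | succ n ih =>
    convert hK.1 n 1 0 0 ih h0 using 1
    funext j; simp [dsum]

theorem _root_.IsRealMatrixConvex.compress_mem_of_posSemidef_one_sub (hK : IsRealMatrixConvex d K)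
    (h0 : (0 : Fin d → Matrix (Fin 1) (Fin 1) ℝ) ∈ K 1) {p n : ℕ}
    {y : Fin d → Matrix (Fin p) (Fin p) ℝ} (hy : y ∈ K p) {V : Matrix (Fin p) (Fin n) ℝ}
    (hV : (1 - Vᵀ * V).PosSemidef) : compress V y ∈ K n := by
  obtain ⟨W, hW⟩ := exists_transpose_mul_self_eq hV
  have hiso : (stack V W)ᵀ * stack V W = 1 := by
    rw [transpose_stack_mul_stack, hW, add_sub_cancel]
  convert hK.2 _ _ _ _ (hK.1 _ _ _ _ hy (hK.zero_mem h0 n)) hiso using 1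
  funext j
  simp [compress, transpose_stack_mul_dsum_mul_stack]

def compressionCone (d n : ℕ) (K : ∀ m : ℕ, Set (Fin d → Matrix (Fin m) (Fin m) ℝ)) :
    Set (Matrix (Fin n) (Fin n) ℝ × (Fin d → Matrix (Fin n) (Fin n) ℝ)) :=
  {s | ∃ (p : ℕ) (y : Fin d → Matrix (Fin p) (Fin p) ℝ) (V : Matrix (Fin p) (Fin n) ℝ),
    y ∈ K p ∧ s = (Vᵀ * V, compress V y)}

variable {n : ℕ}

lemma zero_mem_compressionCone (h0 : (0 : Fin d → Matrix (Fin 1) (Fin 1) ℝ) ∈ K 1) :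
    0 ∈ compressionCone d n K :=
  ⟨1, 0, 0, h0, by ext <;> simp [compress]⟩

lemma gram_compress_sqrt_smul {p : ℕ} {t : ℝ} (ht : 0 ≤ t) (V : Matrix (Fin p) (Fin n) ℝ)
    (y : Fin d → Matrix (Fin p) (Fin p) ℝ) :
    ((√t • V)ᵀ * (√t • V), compress (√t • V) y) = t • (Vᵀ * V, compress V y) := by
  ext <;> simp [compress, ← mul_assoc, Real.mul_self_sqrt ht]

lemma smul_mem_compressionCone {t : ℝ} (ht : 0 ≤ t) {s} (hs : s ∈ compressionCone d n K) :
    t • s ∈ compressionCone d n K := by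
  obtain ⟨p, y, V, hy, rfl⟩ := hs
  exact ⟨p, y, √t • V, hy, (gram_compress_sqrt_smul ht V y).symm⟩

lemma add_mem_compressionCone (hK : IsRealMatrixConvex d K) {s₁ s₂}
    (hs₁ : s₁ ∈ compressionCone d n K) (hs₂ : s₂ ∈ compressionCone d n K) :
    s₁ + s₂ ∈ compressionCone d n K := by
  obtain ⟨p₁, y₁, V₁, hy₁, rfl⟩ := hs₁
  obtain ⟨p₂, y₂, V₂, hy₂, rfl⟩ := hs₂
  refine ⟨p₁ + p₂, fun j => dsum (y₁ j) (y₂ j), stack V₁ V₂, hK.1 _ _ _ _ hy₁ hy₂, ?_⟩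
  ext : 1
  · exact (transpose_stack_mul_stack V₁ V₂).symm
  · funext j; exact (transpose_stack_mul_dsum_mul_stack V₁ V₂ _ _).symm

lemma convex_compressionCone (hK : IsRealMatrixConvex d K) : Convex ℝ (compressionCone d n K) :=
  fun _ hs₁ _ hs₂ _ _ ha hb _ =>
    add_mem_compressionCone hK (smul_mem_compressionCone ha hs₁) (smul_mem_compressionCone hb hs₂)

lemma one_prod_notMem_closure_compressionCone (hK : IsRealMatrixConvex d K)
    (h0 : (0 : Fin d → Matrix (Fin 1) (Fin 1) ℝ) ∈ K 1) (hcl : IsClosed (K n))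
    {x : Fin d → Matrix (Fin n) (Fin n) ℝ} (hx : x ∉ K n) :
    ((1 : Matrix (Fin n) (Fin n) ℝ), x) ∉ closure (compressionCone d n K) := by
  -- `Φ` shrinks a compression until it is contractive, so it maps the cone into `K n`,
  -- and it fixes `(1, x)`.
  let Φ : Matrix (Fin n) (Fin n) ℝ × (Fin d → Matrix (Fin n) (Fin n) ℝ) →
      Fin d → Matrix (Fin n) (Fin n) ℝ :=
    fun s => (1 + sumAbsEntries (s.1 - 1))⁻¹ • s.2
  have hΦ : Continuous Φ := by
    have hden : Continuous fun s : Matrix (Fin n) (Fin n) ℝ × (Fin d → Matrix (Fin n) (Fin n) ℝ) =>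
        1 + sumAbsEntries (s.1 - 1) :=
      continuous_const.add (continuous_sumAbsEntries.comp (continuous_fst.sub continuous_const))
    exact (hden.inv₀ fun s => by linarith [sumAbsEntries_nonneg (s.1 - 1)]).smul continuous_snd
  have hmaps : Set.MapsTo Φ (compressionCone d n K) (K n) := by
    rintro _ ⟨p, y, V, hy, rfl⟩
    have hc : 0 ≤ (1 + sumAbsEntries (Vᵀ * V - 1))⁻¹ :=
      inv_nonneg.2 (by linarith [sumAbsEntries_nonneg (Vᵀ * V - 1)])
    have hscale := Prod.ext_iff.1 (gram_compress_sqrt_smul hc V y)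
    simp only [Prod.smul_fst, Prod.smul_snd] at hscale
    show (1 + sumAbsEntries (Vᵀ * V - 1))⁻¹ • compress V y ∈ K n
    rw [← hscale.2]
    refine hK.compress_mem_of_posSemidef_one_sub h0 hy ?_
    rw [hscale.1]
    exact posSemidef_one_sub_inv_smul (by rw [transpose_mul, transpose_transpose])
  intro hmem
  have := map_mem_closure hΦ hmem hmaps
  rw [hcl.closure_eq] at this
  simp [Φ, sumAbsEntries] at this
  exact hx this

instance {m p : Type*} : LocallyConvexSpace ℝ (Matrix m p ℝ) :=
  inferInstanceAs (LocallyConvexSpace ℝ (m → p → ℝ))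

def weightedPolar (d : ℕ) (K : ∀ m : ℕ, Set (Fin d → Matrix (Fin m) (Fin m) ℝ)) {n : ℕ}
    (B : Matrix (Fin n) (Fin n) ℝ) : Set (Fin d → Matrix (Fin n) (Fin n) ℝ) :=
  {A | ∀ (p : ℕ) (y : Fin d → Matrix (Fin p) (Fin p) ℝ), y ∈ K p →
    ∀ V : Matrix (Fin p) (Fin n) ℝ, tupleTrace A (compress V y) ≤ (B * (Vᵀ * V)).trace}

lemma matPolar_eq_weightedPolar_one : matPolar d K n = weightedPolar d K 1 := by
  ext A
  simp only [matPolar, weightedPolar, Set.mem_ofPred_eq, loewnerLE_reSym_pairing_one_iff,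
    Matrix.one_mul]

lemma compress_mem_weightedPolar {k : ℕ} {B : Matrix (Fin n) (Fin n) ℝ}
    {A : Fin d → Matrix (Fin n) (Fin n) ℝ} (hA : A ∈ weightedPolar d K B)
    (S : Matrix (Fin n) (Fin k) ℝ) : compress S A ∈ weightedPolar d K (Sᵀ * B * S) := by
  intro p y hy V
  rw [tupleTrace_compress]
  refine (hA p y hy _).trans_eq ?_
  rw [transpose_mul, transpose_transpose, trace_mul_comm (Sᵀ * B * S), trace_mul_comm B]
  simp only [Matrix.mul_assoc]
  rw [trace_mul_comm S]
  simp only [Matrix.mul_assoc]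

lemma weightedPolar_mono {B C : Matrix (Fin n) (Fin n) ℝ} (hBC : (C - B).PosSemidef) :
    weightedPolar d K B ⊆ weightedPolar d K C := by
  intro A hA p y hy V
  have hgap : 0 ≤ ((C - B) * (Vᵀ * V)).trace := by
    rw [← Matrix.mul_assoc, trace_mul_comm, ← Matrix.mul_assoc]
    simpa using (hBC.mul_mul_conjTranspose_same V).trace_nonneg
  rw [sub_mul, trace_sub] at hgap
  linarith [hA p y hy V]

lemma posSemidef_of_mem_weightedPolar (h0 : (0 : Fin d → Matrix (Fin 1) (Fin 1) ℝ) ∈ K 1)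
    {B : Matrix (Fin n) (Fin n) ℝ} (hB : Bᵀ = B) {A : Fin d → Matrix (Fin n) (Fin n) ℝ}
    (hA : A ∈ weightedPolar d K B) : B.PosSemidef := by
  refine .of_dotProduct_mulVec_nonneg (by rwa [IsHermitian, conjTranspose_eq_transpose_of_trivial])
    fun w => ?_
  have := hA 1 0 h0 (replicateRow (Fin 1) w)
  have hquad :
      (B * ((replicateRow (Fin 1) w)ᵀ * replicateRow (Fin 1) w)).trace = w ⬝ᵥ (B *ᵥ w) := by
    simp only [trace, diag_apply, mul_apply, transpose_apply, replicateRow_apply,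
      Finset.univ_unique, Finset.sum_singleton, dotProduct, mulVec, Finset.mul_sum]
    exact Finset.sum_congr rfl fun i _ => Finset.sum_congr rfl fun j _ => by ring
  rw [hquad] at this
  simpa [compress, tupleTrace] using this

lemma exists_mem_weightedPolar_trace_lt (hK : IsRealMatrixConvex d K)
    (h0 : (0 : Fin d → Matrix (Fin 1) (Fin 1) ℝ) ∈ K 1) (hcl : IsClosed (K n))
    {x : Fin d → Matrix (Fin n) (Fin n) ℝ} (hx : x ∉ K n) :
    ∃ (B : Matrix (Fin n) (Fin n) ℝ) (A : Fin d → Matrix (Fin n) (Fin n) ℝ),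
      Bᵀ = B ∧ A ∈ weightedPolar d K B ∧ B.trace < tupleTrace A x := by
  obtain ⟨f, u, hfS, hfx⟩ := geometric_hahn_banach_closed_point
    (convex_compressionCone hK).closure isClosed_closure
    (one_prod_notMem_closure_compressionCone hK h0 hcl hx)
  have hu : 0 < u := by simpa using hfS 0 (subset_closure (zero_mem_compressionCone h0))
  have hcone : ∀ s ∈ compressionCone d n K, f s ≤ 0 := fun s hs => by
    by_contra! hpos
    have := hfS ((u / f s) • s) (subset_closure (smul_mem_compressionCone (div_pos hu hpos).le hs))
    rw [map_smul, smul_eq_mul, div_mul_cancel₀ _ hpos.ne'] at this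
    exact lt_irrefl u this
  obtain ⟨M, A, hf⟩ := exists_trace_add_tupleTrace_eq f.toLinearMap
  -- On symmetric matrices `P ↦ tr (Mᵀ P)` only sees the symmetric part of `M`.
  refine ⟨-reSym M, A, by simp [reSym, add_comm], fun p y hy V => ?_, ?_⟩
  · have := hcone _ ⟨p, y, V, hy, rfl⟩
    rw [← ContinuousLinearMap.coe_coe, hf] at this
    rw [neg_mul, trace_neg, trace_reSym_mul M (by rw [transpose_mul, transpose_transpose])]
    linarith
  · have := hf 1 x
    rw [ContinuousLinearMap.coe_coe] at this
    rw [trace_neg, ← Matrix.mul_one (reSym M), trace_reSym_mul M transpose_one]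
    linarith

lemma tupleTrace_le_trace_of_posDef {D : Matrix (Fin n) (Fin n) ℝ} (hD : D.PosDef)
    {A : Fin d → Matrix (Fin n) (Fin n) ℝ} (hA : A ∈ weightedPolar d K D)
    {x : Fin d → Matrix (Fin n) (Fin n) ℝ}
    (hx : ∀ (m : ℕ) (A : Fin d → Matrix (Fin m) (Fin m) ℝ), A ∈ matPolar d K m →
      loewnerLE (reSym (pairing x A)) 1) :
    tupleTrace A x ≤ D.trace := by
  -- Writing `D = RᵀR`, conjugating by `R⁻¹` turns the weight into `1`, i.e. gives an element of
  -- the polar; pairing `x` with it at the vector `Rᵀ` gives back `tupleTrace A x ≤ tr D`.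
  obtain ⟨R, rfl⟩ := exists_transpose_mul_self_eq hD.posSemidef
  have hR : IsUnit R.det := by
    have := (isUnit_iff_isUnit_det _).1 hD.isUnit
    rw [det_mul, det_transpose] at this
    exact isUnit_of_mul_isUnit_left this
  have hnormalized : R⁻¹ᵀ * (Rᵀ * R) * R⁻¹ = 1 := by
    rw [Matrix.mul_assoc, Matrix.mul_assoc, mul_nonsing_inv R hR, Matrix.mul_one, ← transpose_mul,
      mul_nonsing_inv R hR, transpose_one]
  have hpolar := compress_mem_weightedPolar hA R⁻¹
  rw [hnormalized, ← matPolar_eq_weightedPolar_one] at hpolar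
  have := (loewnerLE_reSym_pairing_one_iff x _).1 (hx n _ hpolar) Rᵀ
  rwa [tupleTrace_compress, ← transpose_mul, nonsing_inv_mul R hR, transpose_one, compress_one,
    transpose_transpose, trace_mul_comm] at this

lemma tupleTrace_le_trace_of_posSemidef {B : Matrix (Fin n) (Fin n) ℝ} (hB : B.PosSemidef)
    {A : Fin d → Matrix (Fin n) (Fin n) ℝ} (hA : A ∈ weightedPolar d K B)
    {x : Fin d → Matrix (Fin n) (Fin n) ℝ}
    (hx : ∀ (m : ℕ) (A : Fin d → Matrix (Fin m) (Fin m) ℝ), A ∈ matPolar d K m →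
      loewnerLE (reSym (pairing x A)) 1) :
    tupleTrace A x ≤ B.trace := by
  refine le_of_forall_pos_le_add fun ε hε => ?_
  set δ : ℝ := ε / (n + 1)
  have hδ : 0 < δ := by positivity
  have hδ1 : (δ • (1 : Matrix (Fin n) (Fin n) ℝ)).PosDef := PosDef.one.smul hδ
  have hbound := tupleTrace_le_trace_of_posDef (PosDef.posSemidef_add hB hδ1)
    (weightedPolar_mono (by simpa using hδ1.posSemidef) hA) hx
  have hδn : δ * n ≤ ε := by
    rw [div_mul_eq_mul_div, div_le_iff₀ (by positivity)]
    nlinarith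
  rw [trace_add, trace_smul, trace_one, Fintype.card_fin, smul_eq_mul] at hbound
  linarith

end MatrixConvex

open MatrixConvex in
theorem stmt_10_general (d : ℕ)
    (K : ∀ n : ℕ, Set (Fin d → Matrix (Fin n) (Fin n) ℝ))
    (hK : IsRealMatrixConvex d K) (hclosed : ∀ n, IsClosed (K n))
    (h0 : (0 : Fin d → Matrix (Fin 1) (Fin 1) ℝ) ∈ K 1) (n : ℕ) :
    {x : Fin d → Matrix (Fin n) (Fin n) ℝ |
        ∀ (m : ℕ) (A : Fin d → Matrix (Fin m) (Fin m) ℝ), A ∈ matPolar d K m →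
          loewnerLE (reSym (pairing x A)) 1} = K n := by
  ext x
  refine ⟨fun hx => ?_, fun hx m A hA => hA n x hx⟩
  by_contra hxK
  obtain ⟨B, A, hB, hA, hlt⟩ := exists_mem_weightedPolar_trace_lt hK h0 (hclosed n) hxK
  have hle := tupleTrace_le_trace_of_posSemidef (posSemidef_of_mem_weightedPolar h0 hB hA) hA hx
  exact hlt.not_ge hle

theorem stmt_10 (d : ℕ) (hd : 1 ≤ d)
    (K : ∀ n : ℕ, Set (Fin d → Matrix (Fin n) (Fin n) ℝ))
    (hK : IsRealMatrixConvex d K) (hclosed : ∀ n, IsClosed (K n))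
    (h0 : (0 : Fin d → Matrix (Fin 1) (Fin 1) ℝ) ∈ K 1) (n : ℕ) :
    {x : Fin d → Matrix (Fin n) (Fin n) ℝ |
        ∀ (m : ℕ) (A : Fin d → Matrix (Fin m) (Fin m) ℝ), A ∈ matPolar d K m →
          loewnerLE (reSym (pairing x A)) 1} = K n :=
  stmt_10_general d K hK hclosed h0 n
end

section
/- Fix d ≥ 1 and let K be a real matrix convex set over ℝ^d, with complexification K_c. Then: (a) K_c is a complex matrix convex set over ℂ^d; (b) for every x ∈ K_n one has x + i·0 ∈ (K_c)_n, and conversely a real tuple x with x + i·0 ∈ (K_c)_n satisfies x ∈ K_n; (c) z ∈ (K_c)_n if and only if the entrywise conjugate tuple z̄ ∈ (K_c)_n; (d) if z ∈ (K_c)_n then the tuple of entrywise real parts (Re z_1, …, Re z_d) lies in K_n; (e) every K_n is closed if and only if every (K_c)_n is closed, and every K_n is compact if and only if every (K_c)_n is compact. -/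
open Matrix
open scoped Kronecker

/-- A complex matrix convex set over `ℂ^d`. -/
def IsComplexMatrixConvex (d : ℕ) (L : ∀ n : ℕ, Set (Fin d → Matrix (Fin n) (Fin n) ℂ)) : Prop :=
  (∀ (m p : ℕ) (x : Fin d → Matrix (Fin m) (Fin m) ℂ) (y : Fin d → Matrix (Fin p) (Fin p) ℂ),
    x ∈ L m → y ∈ L p → (fun j => dsum (x j) (y j)) ∈ L (m + p)) ∧
  (∀ (m p : ℕ) (x : Fin d → Matrix (Fin m) (Fin m) ℂ) (β : Matrix (Fin m) (Fin p) ℂ),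
    x ∈ L m → βᴴ * β = 1 → (fun j => βᴴ * x j * β) ∈ L p)

/-- The canonical map `c : M_{k,m}(ℂ) → M_{2k,2m}(ℝ)` sending `Z = X + iY` to the real
block matrix `[[X, -Y], [Y, X]]` (indices reindexed to `Fin (k+k)` and `Fin (m+m)`). -/
noncomputable def cmat {k m : ℕ} (Z : Matrix (Fin k) (Fin m) ℂ) :
    Matrix (Fin (k + k)) (Fin (m + m)) ℝ :=
  Matrix.reindex finSumFinEquiv finSumFinEquiv
    (Matrix.fromBlocks (Z.map Complex.re) (-(Z.map Complex.im))
      (Z.map Complex.im) (Z.map Complex.re))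

/-- The complexification of a graded family `K`: at level `n`, the complex tuples `z` with
`(c(z_1), …, c(z_d)) ∈ K_{2n}`. -/
noncomputable def cplxify (d : ℕ) (K : ∀ n : ℕ, Set (Fin d → Matrix (Fin n) (Fin n) ℝ))
    (n : ℕ) : Set (Fin d → Matrix (Fin n) (Fin n) ℂ) :=
  {z | (fun j => cmat (z j)) ∈ K (n + n)}

open Topology

/-!
The map `c` is an injective, continuous, unital `*`-homomorphism from complex to real matrices
(`c(ZW) = c(Z)c(W)`, `c(Zᴴ) = c(Z)ᵀ`), so it carries complex isometries to real isometries and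
complex compressions to real compressions. The remaining closure properties of `K_c` come from
compressing by coordinate permutations and embeddings: `c(z ⊕ w)` is a permutation of
`c(z) ⊕ c(w)`, `c(z̄)` is `c(z)` with its two halves swapped, `Re z` is the upper left corner of
`c(z)`, and `c(x + i·0) = x ⊕ x`. Closedness and compactness transfer because both `c` and
`x ↦ x + i·0` are closed embeddings, and `K_n` is the preimage of `(K_c)_n` under the latter.
-/

theorem IsRealMatrixConvex.submatrix_mem {d : ℕ}
    {K : ∀ n : ℕ, Set (Fin d → Matrix (Fin n) (Fin n) ℝ)} (hK : IsRealMatrixConvex d K)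
    {m p : ℕ} {f : Fin p → Fin m} (hf : Function.Injective f)
    {x : Fin d → Matrix (Fin m) (Fin m) ℝ} (hx : x ∈ K m) :
    (fun j => (x j).submatrix f f) ∈ K p := by
  set β : Matrix (Fin m) (Fin p) ℝ := (1 : Matrix (Fin m) (Fin m) ℝ).submatrix id f
  have hβ : βᵀ * β = 1 := by
    ext i j
    simp [β, mul_apply, one_apply, hf.eq_iff]
  convert hK.2 m p x β hx hβ using 2
  ext a b
  simp [β, mul_apply, one_apply]

-- `simp` rewrites `Fin.natAdd n i : Fin (n + n)` to `i.addNat n`, which would keep the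
-- `natAdd` block-entry lemmas below from firing; hence `-Fin.natAdd_eq_addNat` throughout.

section
variable {α : Type*} [Zero α] {m p : ℕ} (A : Matrix (Fin m) (Fin m) α)
  (B : Matrix (Fin p) (Fin p) α)

@[simp] theorem dsum_castAdd_castAdd (a b : Fin m) :
    dsum A B (Fin.castAdd p a) (Fin.castAdd p b) = A a b := by
  simp [dsum]

@[simp] theorem dsum_castAdd_natAdd (a : Fin m) (b : Fin p) :
    dsum A B (Fin.castAdd p a) (Fin.natAdd m b) = 0 := by
  simp [dsum, -Fin.natAdd_eq_addNat]

@[simp] theorem dsum_natAdd_castAdd (a : Fin p) (b : Fin m) :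
    dsum A B (Fin.natAdd m a) (Fin.castAdd p b) = 0 := by
  simp [dsum, -Fin.natAdd_eq_addNat]

@[simp] theorem dsum_natAdd_natAdd (a b : Fin p) :
    dsum A B (Fin.natAdd m a) (Fin.natAdd m b) = B a b := by
  simp [dsum, -Fin.natAdd_eq_addNat]
end

section
variable {k m : ℕ} (Z : Matrix (Fin k) (Fin m) ℂ) (a : Fin k) (b : Fin m)

@[simp] theorem cmat_castAdd_castAdd :
    cmat Z (Fin.castAdd k a) (Fin.castAdd m b) = (Z a b).re := by
  simp [cmat]

@[simp] theorem cmat_castAdd_natAdd :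
    cmat Z (Fin.castAdd k a) (Fin.natAdd m b) = -(Z a b).im := by
  simp [cmat, -Fin.natAdd_eq_addNat]

@[simp] theorem cmat_natAdd_castAdd :
    cmat Z (Fin.natAdd k a) (Fin.castAdd m b) = (Z a b).im := by
  simp [cmat, -Fin.natAdd_eq_addNat]

@[simp] theorem cmat_natAdd_natAdd :
    cmat Z (Fin.natAdd k a) (Fin.natAdd m b) = (Z a b).re := by
  simp [cmat, -Fin.natAdd_eq_addNat]
end

def finAddAddComm (m p : ℕ) : Fin ((m + p) + (m + p)) ≃ Fin ((m + m) + (p + p)) :=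
  finSumFinEquiv.symm.trans <| (Equiv.sumCongr finSumFinEquiv.symm finSumFinEquiv.symm).trans <|
    (Equiv.sumSumSumComm _ _ _ _).trans <|
      (Equiv.sumCongr finSumFinEquiv finSumFinEquiv).trans finSumFinEquiv

theorem cmat_dsum {m p : ℕ} (A : Matrix (Fin m) (Fin m) ℂ) (B : Matrix (Fin p) (Fin p) ℂ) :
    cmat (dsum A B) =
      (dsum (cmat A) (cmat B)).submatrix (finAddAddComm m p) (finAddAddComm m p) := by
  ext i j
  induction i using Fin.addCases <;> induction j using Fin.addCases <;> rename_i i j <;>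
    induction i using Fin.addCases <;> induction j using Fin.addCases <;>
    simp [finAddAddComm, -Fin.natAdd_eq_addNat]

theorem cmat_mul {k m l : ℕ} (Z : Matrix (Fin k) (Fin m) ℂ) (W : Matrix (Fin m) (Fin l) ℂ) :
    cmat (Z * W) = cmat Z * cmat W := by
  have hre : (Z * W).map Complex.re =
      Z.map Complex.re * W.map Complex.re - Z.map Complex.im * W.map Complex.im := by
    ext i j
    simp [mul_apply, Complex.mul_re, Finset.sum_sub_distrib]
  have him : (Z * W).map Complex.im =
      Z.map Complex.re * W.map Complex.im + Z.map Complex.im * W.map Complex.re := by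
    ext i j
    simp [mul_apply, Complex.mul_im, Finset.sum_add_distrib]
  simp only [cmat, reindex_apply, submatrix_mul_equiv, fromBlocks_multiply, hre, him,
    Matrix.neg_mul, Matrix.mul_neg]
  congr 2 <;> abel

theorem cmat_conjTranspose {k m : ℕ} (Z : Matrix (Fin k) (Fin m) ℂ) :
    cmat Zᴴ = (cmat Z)ᵀ := by
  ext i j
  induction i using Fin.addCases <;> induction j using Fin.addCases <;>
    simp [-Fin.natAdd_eq_addNat]

theorem cmat_one {m : ℕ} : cmat (1 : Matrix (Fin m) (Fin m) ℂ) = 1 := by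
  ext i j
  induction i using Fin.addCases <;> induction j using Fin.addCases <;>
    simp [one_apply, apply_ite, Fin.ext_iff, -Fin.natAdd_eq_addNat] <;> omega

theorem cmat_map_ofReal {n : ℕ} (x : Matrix (Fin n) (Fin n) ℝ) :
    cmat (x.map Complex.ofReal) = dsum x x := by
  ext i j
  induction i using Fin.addCases <;> induction j using Fin.addCases <;>
    simp [-Fin.natAdd_eq_addNat]

theorem cmat_map_conj {k m : ℕ} (Z : Matrix (Fin k) (Fin m) ℂ) :
    cmat (Z.map (starRingEnd ℂ)) = (cmat Z).submatrix finAddFlip finAddFlip := by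
  ext i j
  induction i using Fin.addCases <;> induction j using Fin.addCases <;>
    simp [-Fin.natAdd_eq_addNat]

theorem cmat_submatrix_castAdd {k m : ℕ} (Z : Matrix (Fin k) (Fin m) ℂ) :
    (cmat Z).submatrix (Fin.castAdd k) (Fin.castAdd m) = Z.map Complex.re := by
  ext i j
  simp

theorem isClosedEmbedding_cmat {k m : ℕ} :
    IsClosedEmbedding (cmat : Matrix (Fin k) (Fin m) ℂ → _) := by
  refine Function.LeftInverse.isClosedEmbedding (f := fun w => Matrix.of fun a b =>
    (w (Fin.castAdd k a) (Fin.castAdd m b) + w (Fin.natAdd k a) (Fin.castAdd m b) * Complex.I :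
      ℂ))
    (fun Z => ?_) ?_ ?_
  · ext a b; simp [-Fin.natAdd_eq_addNat]
  · exact continuous_matrix fun a b => by fun_prop
  · unfold cmat; fun_prop

theorem isClosedEmbedding_map_ofReal {k m : ℕ} :
    IsClosedEmbedding fun x : Matrix (Fin k) (Fin m) ℝ => x.map Complex.ofReal :=
  Function.LeftInverse.isClosedEmbedding (f := fun z => z.map Complex.re) (fun x => by ext; simp)
    (continuous_id.matrix_map Complex.continuous_re)
    (continuous_id.matrix_map Complex.continuous_ofReal)

theorem mem_cplxify {d n : ℕ} {K : ∀ n : ℕ, Set (Fin d → Matrix (Fin n) (Fin n) ℝ)}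
    {z : Fin d → Matrix (Fin n) (Fin n) ℂ} :
    z ∈ cplxify d K n ↔ (fun j => cmat (z j)) ∈ K (n + n) :=
  Iff.rfl

namespace IsRealMatrixConvex

variable {d : ℕ} {K : ∀ n : ℕ, Set (Fin d → Matrix (Fin n) (Fin n) ℝ)}
  (hK : IsRealMatrixConvex d K)
include hK

theorem map_re_mem_of_mem_cplxify {n : ℕ} {z : Fin d → Matrix (Fin n) (Fin n) ℂ}
    (hz : z ∈ cplxify d K n) : (fun j => (z j).map Complex.re) ∈ K n := by
  simpa only [cmat_submatrix_castAdd] using hK.submatrix_mem (Fin.castAdd_injective n n) hz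

theorem map_ofReal_mem_cplxify_iff {n : ℕ} {x : Fin d → Matrix (Fin n) (Fin n) ℝ} :
    (fun j => (x j).map Complex.ofReal) ∈ cplxify d K n ↔ x ∈ K n := by
  refine ⟨fun hx => ?_, fun hx => ?_⟩
  · simpa [Function.comp_def] using hK.map_re_mem_of_mem_cplxify hx
  · simpa only [mem_cplxify, cmat_map_ofReal] using hK.1 n n x x hx hx

theorem map_conj_mem_cplxify {n : ℕ} {z : Fin d → Matrix (Fin n) (Fin n) ℂ}
    (hz : z ∈ cplxify d K n) : (fun j => (z j).map (starRingEnd ℂ)) ∈ cplxify d K n := by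
  simpa only [mem_cplxify, cmat_map_conj] using
    hK.submatrix_mem finAddFlip.injective hz

theorem map_conj_mem_cplxify_iff {n : ℕ} {z : Fin d → Matrix (Fin n) (Fin n) ℂ} :
    (fun j => (z j).map (starRingEnd ℂ)) ∈ cplxify d K n ↔ z ∈ cplxify d K n := by
  refine ⟨fun hz => ?_, hK.map_conj_mem_cplxify⟩
  simpa [Function.comp_def] using hK.map_conj_mem_cplxify hz

theorem dsum_mem_cplxify {m p : ℕ} {z : Fin d → Matrix (Fin m) (Fin m) ℂ}
    {w : Fin d → Matrix (Fin p) (Fin p) ℂ} (hz : z ∈ cplxify d K m)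
    (hw : w ∈ cplxify d K p) :
    (fun j => dsum (z j) (w j)) ∈ cplxify d K (m + p) := by
  simpa only [mem_cplxify, cmat_dsum] using
    hK.submatrix_mem (finAddAddComm m p).injective (hK.1 _ _ _ _ hz hw)

theorem compress_mem_cplxify {m p : ℕ} {z : Fin d → Matrix (Fin m) (Fin m) ℂ}
    {β : Matrix (Fin m) (Fin p) ℂ} (hz : z ∈ cplxify d K m) (hβ : βᴴ * β = 1) :
    (fun j => βᴴ * z j * β) ∈ cplxify d K p := by
  have hcβ : (cmat β)ᵀ * cmat β = 1 := by
    rw [← cmat_conjTranspose, ← cmat_mul, hβ, cmat_one]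
  simpa only [mem_cplxify, cmat_mul, cmat_conjTranspose] using
    hK.2 _ _ _ _ hz hcβ

theorem isComplexMatrixConvex_cplxify : IsComplexMatrixConvex d (cplxify d K) :=
  ⟨fun _ _ _ _ => hK.dsum_mem_cplxify, fun _ _ _ _ => hK.compress_mem_cplxify⟩

theorem preimage_map_ofReal_cplxify (n : ℕ) :
    Pi.map (fun (_ : Fin d) (x : Matrix (Fin n) (Fin n) ℝ) => x.map Complex.ofReal) ⁻¹'
      cplxify d K n = K n :=
  Set.ext fun _ => hK.map_ofReal_mem_cplxify_iff

theorem forall_isClosed_iff_forall_isClosed_cplxify :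
    (∀ n, IsClosed (K n)) ↔ ∀ n, IsClosed (cplxify d K n) := by
  refine ⟨fun h n => (h (n + n)).preimage ?_, fun h n => ?_⟩
  · exact (IsClosedEmbedding.piMap fun _ => isClosedEmbedding_cmat).continuous
  · rw [← hK.preimage_map_ofReal_cplxify]
    exact (h n).preimage
      (IsClosedEmbedding.piMap fun _ => isClosedEmbedding_map_ofReal).continuous

theorem forall_isCompact_iff_forall_isCompact_cplxify :
    (∀ n, IsCompact (K n)) ↔ ∀ n, IsCompact (cplxify d K n) := by
  refine ⟨fun h n => ?_, fun h n => ?_⟩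
  · exact (IsClosedEmbedding.piMap fun _ => isClosedEmbedding_cmat).isCompact_preimage
      (h (n + n))
  · rw [← hK.preimage_map_ofReal_cplxify]
    exact (IsClosedEmbedding.piMap fun _ => isClosedEmbedding_map_ofReal).isCompact_preimage (h n)

end IsRealMatrixConvex

theorem stmt_11_general (d : ℕ)
    (K : ∀ n : ℕ, Set (Fin d → Matrix (Fin n) (Fin n) ℝ))
    (hK : IsRealMatrixConvex d K) :
    -- (a)
    IsComplexMatrixConvex d (cplxify d K) ∧
    -- (b)
    (∀ (n : ℕ) (x : Fin d → Matrix (Fin n) (Fin n) ℝ),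
      x ∈ K n ↔ (fun j => (x j).map Complex.ofReal) ∈ cplxify d K n) ∧
    -- (c)
    (∀ (n : ℕ) (z : Fin d → Matrix (Fin n) (Fin n) ℂ),
      z ∈ cplxify d K n ↔ (fun j => (z j).map (starRingEnd ℂ)) ∈ cplxify d K n) ∧
    -- (d)
    (∀ (n : ℕ) (z : Fin d → Matrix (Fin n) (Fin n) ℂ),
      z ∈ cplxify d K n → (fun j => (z j).map Complex.re) ∈ K n) ∧
    -- (e)
    ((∀ n, IsClosed (K n)) ↔ (∀ n, IsClosed (cplxify d K n))) ∧
    ((∀ n, IsCompact (K n)) ↔ (∀ n, IsCompact (cplxify d K n))) :=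
  ⟨hK.isComplexMatrixConvex_cplxify, fun _ _ => hK.map_ofReal_mem_cplxify_iff.symm,
    fun _ _ => hK.map_conj_mem_cplxify_iff.symm, fun _ _ => hK.map_re_mem_of_mem_cplxify,
    hK.forall_isClosed_iff_forall_isClosed_cplxify,
    hK.forall_isCompact_iff_forall_isCompact_cplxify⟩

theorem stmt_11 (d : ℕ) (hd : 1 ≤ d)
    (K : ∀ n : ℕ, Set (Fin d → Matrix (Fin n) (Fin n) ℝ))
    (hK : IsRealMatrixConvex d K) :
    -- (a)
    IsComplexMatrixConvex d (cplxify d K) ∧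
    -- (b)
    (∀ (n : ℕ) (x : Fin d → Matrix (Fin n) (Fin n) ℝ),
      x ∈ K n ↔ (fun j => (x j).map Complex.ofReal) ∈ cplxify d K n) ∧
    -- (c)
    (∀ (n : ℕ) (z : Fin d → Matrix (Fin n) (Fin n) ℂ),
      z ∈ cplxify d K n ↔ (fun j => (z j).map (starRingEnd ℂ)) ∈ cplxify d K n) ∧
    -- (d)
    (∀ (n : ℕ) (z : Fin d → Matrix (Fin n) (Fin n) ℂ),
      z ∈ cplxify d K n → (fun j => (z j).map Complex.re) ∈ K n) ∧
    -- (e)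
    ((∀ n, IsClosed (K n)) ↔ (∀ n, IsClosed (cplxify d K n))) ∧
    ((∀ n, IsCompact (K n)) ↔ (∀ n, IsCompact (cplxify d K n))) :=
  stmt_11_general d K hK
end

section
/- Fix d ≥ 1 and let K be a real matrix convex set over ℝ^d. For every z ∈ (K_c)_n one has z = u_nᴴ · w · u_n, where w = (c(z_1), …, c(z_d)) ∈ K_{2n} is viewed as a tuple of complex matrices and u_n = (1/√2)[1_n; −i·1_n]. Consequently K_c is the smallest complex matrix convex set containing the image of K: if L is any complex matrix convex set over ℂ^d with {x + i·0 : x ∈ K_m} ⊆ L_m for all m, then (K_c)_m ⊆ L_m for all m. -/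
open Matrix
open scoped Kronecker

/-- The isometry `u_n = (1/√2) [1_n ; -i·1_n]` (a block column). -/
noncomputable def uMat (n : ℕ) : Matrix (Fin (n + n)) (Fin n) ℂ :=
  (((Real.sqrt 2 : ℝ) : ℂ))⁻¹ •
    (Matrix.reindex finSumFinEquiv (Equiv.refl (Fin n))
      (Matrix.fromRows (1 : Matrix (Fin n) (Fin n) ℂ)
        ((-Complex.I) • (1 : Matrix (Fin n) (Fin n) ℂ))))

/-
For `Z = X + iY`, the range of `u_n = (1/√2)[1; -i]` is invariant under `c(Z)`, which acts
on it as `Z`: `c(Z) u_n = u_n Z`. As `u_n` is an isometry, `u_nᴴ c(Z) u_n = Z`. So every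
`z ∈ (K_c)_n` is the compression by `u_n` of `c(z) ∈ K_{2n}`, and hence lies in every complex
matrix convex set containing the image of `K`.
-/

lemma inv_sqrt_two_mul_inv_sqrt_two :
    (((Real.sqrt 2 : ℝ) : ℂ))⁻¹ * (((Real.sqrt 2 : ℝ) : ℂ))⁻¹ = 2⁻¹ := by
  rw [← mul_inv, ← Complex.ofReal_mul, Real.mul_self_sqrt zero_le_two]
  norm_num

lemma uMat_conjTranspose (n : ℕ) :
    (uMat n)ᴴ = (((Real.sqrt 2 : ℝ) : ℂ))⁻¹ •
      (fromCols (1 : Matrix (Fin n) (Fin n) ℂ) (Complex.I • 1)).submatrix id finSumFinEquiv.symm := by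
  rw [uMat, conjTranspose_smul]
  congr 1
  · simp
  · rw [reindex_apply, conjTranspose_submatrix,
      conjTranspose_fromRows_eq_fromCols_conjTranspose, conjTranspose_smul]
    simp

lemma uMat_conjTranspose_mul_uMat (n : ℕ) : (uMat n)ᴴ * uMat n = 1 := by
  rw [uMat_conjTranspose, uMat, reindex_apply, Matrix.smul_mul, Matrix.mul_smul, smul_smul,
    inv_sqrt_two_mul_inv_sqrt_two, Equiv.refl_symm, Equiv.coe_refl,
    submatrix_mul_equiv _ _ _ finSumFinEquiv.symm _, submatrix_id_id, fromCols_mul_fromRows]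
  simp only [one_mul, Matrix.smul_mul, Matrix.mul_smul, smul_smul]
  match_scalars
  simp [Complex.I_mul_I]
  ring

lemma uMat_conjTranspose_mul_fromBlocks_mul_uMat (n : ℕ) (X Y : Matrix (Fin n) (Fin n) ℂ) :
    (uMat n)ᴴ * reindex finSumFinEquiv finSumFinEquiv (fromBlocks X (-Y) Y X) * uMat n =
      X + Complex.I • Y := by
  rw [uMat_conjTranspose, uMat, reindex_apply, reindex_apply, Matrix.smul_mul, Matrix.mul_smul,
    Matrix.smul_mul, smul_smul, inv_sqrt_two_mul_inv_sqrt_two, Equiv.refl_symm,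
    Equiv.coe_refl, submatrix_mul_equiv _ _ _ finSumFinEquiv.symm _,
    submatrix_mul_equiv _ _ _ finSumFinEquiv.symm _, submatrix_id_id, fromCols_mul_fromBlocks,
    fromCols_mul_fromRows]
  simp only [one_mul, mul_one, Matrix.smul_mul, Matrix.mul_smul]
  match_scalars <;> simp [Complex.I_mul_I] <;> ring

lemma cmat_map_ofReal_s12 {k m : ℕ} (Z : Matrix (Fin k) (Fin m) ℂ) :
    (cmat Z).map Complex.ofReal = reindex finSumFinEquiv finSumFinEquiv
      (fromBlocks ((Z.map Complex.re).map Complex.ofReal)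
        (-(Z.map Complex.im).map Complex.ofReal)
        ((Z.map Complex.im).map Complex.ofReal)
        ((Z.map Complex.re).map Complex.ofReal)) := by
  rw [cmat, reindex_apply, reindex_apply, ← submatrix_map, fromBlocks_map, Matrix.map_neg _
    Complex.ofReal_neg, Matrix.map_map, Matrix.map_map]

lemma uMat_conjTranspose_mul_cmat_mul_uMat {n : ℕ} (Z : Matrix (Fin n) (Fin n) ℂ) :
    (uMat n)ᴴ * (cmat Z).map Complex.ofReal * uMat n = Z := by
  rw [cmat_map_ofReal_s12, uMat_conjTranspose_mul_fromBlocks_mul_uMat]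
  ext i j
  simp [Complex.ext_iff]

lemma cplxify_subset {d : ℕ} (K : ∀ n : ℕ, Set (Fin d → Matrix (Fin n) (Fin n) ℝ))
    (L : ∀ n : ℕ, Set (Fin d → Matrix (Fin n) (Fin n) ℂ)) (hL : IsComplexMatrixConvex d L)
    (hKL : ∀ (m : ℕ) (x : Fin d → Matrix (Fin m) (Fin m) ℝ), x ∈ K m →
      (fun j => (x j).map Complex.ofReal) ∈ L m) (m : ℕ) :
    cplxify d K m ⊆ L m := by
  intro z hz
  have hcompress := hL.2 (m + m) m _ (uMat m) (hKL (m + m) _ hz) (uMat_conjTranspose_mul_uMat m)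
  simpa only [uMat_conjTranspose_mul_cmat_mul_uMat] using hcompress

theorem stmt_12_general (d : ℕ)
    (K : ∀ n : ℕ, Set (Fin d → Matrix (Fin n) (Fin n) ℝ)) :
    -- every z ∈ (K_c)_n is the compression by u_n of the tuple w = c(z) ∈ K_{2n}
    (∀ (n : ℕ) (z : Fin d → Matrix (Fin n) (Fin n) ℂ), z ∈ cplxify d K n →
      ∀ j, z j = (uMat n)ᴴ * (cmat (z j)).map Complex.ofReal * uMat n) ∧
    -- K_c is the smallest complex matrix convex set containing the image of K
    (∀ L : ∀ n : ℕ, Set (Fin d → Matrix (Fin n) (Fin n) ℂ), IsComplexMatrixConvex d L →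
      (∀ (m : ℕ) (x : Fin d → Matrix (Fin m) (Fin m) ℝ), x ∈ K m →
        (fun j => (x j).map Complex.ofReal) ∈ L m) →
      ∀ m : ℕ, cplxify d K m ⊆ L m) :=
  ⟨fun _ z _ j => (uMat_conjTranspose_mul_cmat_mul_uMat (z j)).symm,
    fun L hL hKL => cplxify_subset K L hL hKL⟩

theorem stmt_12 (d : ℕ) (hd : 1 ≤ d)
    (K : ∀ n : ℕ, Set (Fin d → Matrix (Fin n) (Fin n) ℝ))
    (hK : IsRealMatrixConvex d K) :
    -- every z ∈ (K_c)_n is the compression by u_n of the tuple w = c(z) ∈ K_{2n}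
    (∀ (n : ℕ) (z : Fin d → Matrix (Fin n) (Fin n) ℂ), z ∈ cplxify d K n →
      ∀ j, z j = (uMat n)ᴴ * (cmat (z j)).map Complex.ofReal * uMat n) ∧
    -- K_c is the smallest complex matrix convex set containing the image of K
    (∀ L : ∀ n : ℕ, Set (Fin d → Matrix (Fin n) (Fin n) ℂ), IsComplexMatrixConvex d L →
      (∀ (m : ℕ) (x : Fin d → Matrix (Fin m) (Fin m) ℝ), x ∈ K m →
        (fun j => (x j).map Complex.ofReal) ∈ L m) →
      ∀ m : ℕ, cplxify d K m ⊆ L m) :=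
  stmt_12_general d K
end
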